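/- Let P be a nonconstant polynomial with complex coefficients, viewed as the map z ↦ P(z) on ℂ, let U be a nonempty connected open subset of ℂ, and let W be a connected component of P⁻¹(U). Then P maps W surjectively onto U, i.e. P(W) = U. -/

import Mathlib

open Polynomial Set

/-! A nonconstant complex polynomial is an open map (open mapping theorem) and a closed map
(it is proper). The image of a component `W` of `P⁻¹(U)` is therefore open, and it is closed
in `U` because `W` is closed in `P⁻¹(U)`; being nonempty, it is all of the connected set `U`. -/

theorem closure_connectedComponentIn_inter_subset {X : Type*} [TopologicalSpace X]
    (F : Set X) (x : X) : closure (connectedComponentIn F x) ∩ F ⊆ connectedComponentIn F x := by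
  by_cases hx : x ∈ F
  · have hpre : IsPreconnected (closure (connectedComponentIn F x) ∩ F) :=
      isPreconnected_connectedComponentIn.subset_closure
        (subset_inter subset_closure (connectedComponentIn_subset F x)) inter_subset_left
    exact hpre.subset_connectedComponentIn
      ⟨subset_closure (mem_connectedComponentIn hx), hx⟩ inter_subset_right
  · simp [connectedComponentIn_eq_empty hx]

theorem IsOpenMap.image_connectedComponentIn_preimage {X Y : Type*} [TopologicalSpace X]
    [LocallyConnectedSpace X] [TopologicalSpace Y] {f : X → Y} (hfo : IsOpenMap f)
    (hfc : IsClosedMap f) (hf : Continuous f) {U : Set Y} (hUo : IsOpen U)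
    (hU : IsPreconnected U) {x : X} (hx : f x ∈ U) :
    f '' connectedComponentIn (f ⁻¹' U) x = U := by
  set W := connectedComponentIn (f ⁻¹' U) x
  have himage_sub : f '' W ⊆ U := image_subset_iff.2 (connectedComponentIn_subset _ _)
  have himage_open : IsOpen (f '' W) := hfo _ (hUo.preimage hf).connectedComponentIn
  have himage_closed : closure (f '' W) ∩ U ⊆ f '' W := by
    rintro _ ⟨hy, hyU⟩
    obtain ⟨w, hw, rfl⟩ := hfc.closure_image_subset W hy
    exact ⟨w, closure_connectedComponentIn_inter_subset _ _ ⟨hw, hyU⟩, rfl⟩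
  exact himage_sub.antisymm <| hU.subset_of_closure_inter_subset himage_open
    ⟨f x, hx, x, mem_connectedComponentIn hx, rfl⟩ himage_closed

theorem image_component_of_preimage_open_connected_general (P : Polynomial ℂ)
    (hP : 0 < P.natDegree) (U : Set ℂ) (hUo : IsOpen U)
    (hUconn : IsConnected U) (W : Set ℂ)
    (hW : ∃ z ∈ (fun w : ℂ => P.eval w) ⁻¹' U,
      W = connectedComponentIn ((fun w : ℂ => P.eval w) ⁻¹' U) z) :
    (fun w : ℂ => P.eval w) '' W = U := by
  obtain ⟨z, hz, rfl⟩ := hW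
  have hopen := P.isOpenQuotientMap_eval hP.ne'
  exact hopen.isOpenMap.image_connectedComponentIn_preimage P.isClosedMap_eval hopen.continuous
    hUo hUconn.isPreconnected hz

/-- For a nonconstant polynomial `P` over `ℂ`, a nonempty connected open set `U ⊆ ℂ`,
and a connected component `W` of `P⁻¹(U)`, the map `P` sends `W` onto `U`:
`P(W) = U`. -/
theorem image_component_of_preimage_open_connected (P : Polynomial ℂ)
    (hP : 0 < P.natDegree) (U : Set ℂ) (hUo : IsOpen U) (hUne : U.Nonempty)
    (hUconn : IsConnected U) (W : Set ℂ)
    (hW : ∃ z ∈ (fun w : ℂ => P.eval w) ⁻¹' U,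
      W = connectedComponentIn ((fun w : ℂ => P.eval w) ⁻¹' U) z) :
    (fun w : ℂ => P.eval w) '' W = U :=
  image_component_of_preimage_open_connected_general P hP U hUo hUconn W hW
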